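/- Fix an integer p ≥ 2, a > 0 and b ∈ ℝ. Define on (−1,1) the two Landau functionals L₁(m) := a·(p−1)·m^p/p − log(2·cosh(a·m^{p−1} + b)) and L₂(m) := −a·m^p/p − b·m + g(m). Then for every m ∈ (−1,1) satisfying the mean-field equation m = tanh(a·m^{p−1} + b), one has L₁(m) = L₂(m). -/

import Mathlib

open Real

/-- Minus the binary entropy as a function of the magnetization `m`:
`g(m) = ((1-m)/2) log((1-m)/2) + ((1+m)/2) log((1+m)/2)`. -/
noncomputable def gEntropy (m : ℝ) : ℝ :=
  ((1 - m) / 2) * Real.log ((1 - m) / 2) + ((1 + m) / 2) * Real.log ((1 + m) / 2)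

/-- The Landau functional of method M1 for the fully connected `p`-spin model:
`L₁(m) = a(p-1)mᵖ/p - log(2 cosh(a m^{p-1} + b))`. -/
noncomputable def landauL1 (p : ℕ) (a b : ℝ) (m : ℝ) : ℝ :=
  a * (p - 1 : ℝ) * m ^ p / p - Real.log (2 * Real.cosh (a * m ^ (p - 1) + b))

/-- The Landau functional of method M2 for the fully connected `p`-spin model:
`L₂(m) = -a mᵖ/p - b m + g(m)`. -/
noncomputable def landauL2 (p : ℕ) (a b : ℝ) (m : ℝ) : ℝ :=
  -(a * m ^ p / p) - b * m + gEntropy m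

/-!
At a solution of the mean-field equation `m = tanh x` with `x = a m^{p-1} + b`, the two-point
distribution `((1 - m)/2, (1 + m)/2)` equals `(e^{-x}, e^x) / (2 cosh x)`, so the entropy term is the
Legendre dual of `log (2 cosh)`: `g(tanh x) = x tanh x - log (2 cosh x)`. Substituting this into
`L₂` and using `m · m^{p-1} = m^p` turns `L₂` into `L₁`.
-/

namespace Real

theorem one_add_tanh_div_two (x : ℝ) : (1 + tanh x) / 2 = exp x / (2 * cosh x) := by
  have := cosh_pos x
  rw [tanh_eq_sinh_div_cosh, ← cosh_add_sinh]
  field_simp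

theorem one_sub_tanh_div_two (x : ℝ) : (1 - tanh x) / 2 = exp (-x) / (2 * cosh x) := by
  have := cosh_pos x
  rw [tanh_eq_sinh_div_cosh, ← cosh_sub_sinh]
  field_simp

theorem log_one_add_tanh_div_two (x : ℝ) :
    log ((1 + tanh x) / 2) = x - log (2 * cosh x) := by
  rw [one_add_tanh_div_two, log_div (exp_ne_zero _) (by positivity), log_exp]

theorem log_one_sub_tanh_div_two (x : ℝ) :
    log ((1 - tanh x) / 2) = -x - log (2 * cosh x) := by
  rw [one_sub_tanh_div_two, log_div (exp_ne_zero _) (by positivity), log_exp]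

end Real

theorem gEntropy_tanh (x : ℝ) : gEntropy (tanh x) = x * tanh x - log (2 * cosh x) := by
  rw [gEntropy, log_one_sub_tanh_div_two, log_one_add_tanh_div_two]
  ring

theorem landau_functionals_agree_at_stationary_points
    (p : ℕ) (hp : 2 ≤ p) (a b : ℝ) :
    ∀ m ∈ Set.Ioo (-1 : ℝ) 1,
      m = Real.tanh (a * m ^ (p - 1) + b) → landauL1 p a b m = landauL2 p a b m := by
  intro m _ hmf
  have hg := gEntropy_tanh (a * m ^ (p - 1) + b)
  rw [← hmf] at hg
  have hmp : m * m ^ (p - 1) = m ^ p := mul_pow_sub_one (by omega) m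
  have hp0 : (p : ℝ) ≠ 0 := by positivity
  rw [landauL1, landauL2, hg, ← hmp]
  field_simp
  ring
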